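/- In the clade graph G_{T₁,T₂} of two rooted trees T₁, T₂ on leaf set [n], every clade C of T₁ is adjacent to the smallest clade of T₂ containing C, and moreover the set of T₂-clades adjacent to C has a unique maximal element which is this smallest containing clade. -/

import Mathlib

/-
Write `mca F a b` for the smallest clade of `F` containing `a` and `b`. Any three leaves satisfy the
ultrametric rule `mca a b ⊆ mca a k ∨ mca a b ⊆ mca b k`, and if `k ∉ mca a b` then `mca a k`
strictly contains `mca a b`. Among the pairs `a, b ∈ C` with `mca F₁ a b = C` take one for which
`mca F₂ a b` is as large as possible. If some `k ∈ C` lay outside `mca F₂ a b`, the ultrametric rule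
in `F₁` would let us replace `b` (or `a`) by `k` and keep `mca F₁ = C`, while `mca F₂` strictly
grows. So `C ⊆ mca F₂ a b ⊆ D`, and since `D` is minimal, `mca F₂ a b = D`.
-/

/-- A rooted tree on leaf set `[n]`, identified with its family of clades. -/
def IsCladeFamily {n : ℕ} (F : Finset (Finset (Fin n))) : Prop :=
  Finset.univ ∈ F ∧ (∀ i : Fin n, {i} ∈ F) ∧
  ∀ A ∈ F, ∀ B ∈ F, A ⊆ B ∨ B ⊆ A ∨ Disjoint A B

/-- The most recent common ancestor (smallest clade containing both `u` and `v`). -/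
def mca {n : ℕ} (F : Finset (Finset (Fin n))) (u v : Fin n) : Finset (Fin n) :=
  (F.filter (fun A => u ∈ A ∧ v ∈ A)).inf id

open Finset

section Mca

variable {n : ℕ} {F : Finset (Finset (Fin n))}

theorem mca_comm (F : Finset (Finset (Fin n))) (u v : Fin n) : mca F u v = mca F v u := by
  simp only [mca, and_comm]

theorem left_mem_mca (F : Finset (Finset (Fin n))) (u v : Fin n) : u ∈ mca F u v := by
  classical
  exact mem_inf.mpr fun A hA => (mem_filter.mp hA).2.1

theorem right_mem_mca (F : Finset (Finset (Fin n))) (u v : Fin n) : v ∈ mca F u v :=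
  mca_comm F v u ▸ left_mem_mca F v u

theorem mca_subset {A : Finset (Fin n)} (hA : A ∈ F) {u v : Fin n} (hu : u ∈ A) (hv : v ∈ A) :
    mca F u v ⊆ A :=
  inf_le (f := id) (mem_filter.mpr ⟨hA, hu, hv⟩)

theorem IsCladeFamily.subset_or_subset (hF : IsCladeFamily F) {A B : Finset (Fin n)}
    (hA : A ∈ F) (hB : B ∈ F) {u : Fin n} (huA : u ∈ A) (huB : u ∈ B) : A ⊆ B ∨ B ⊆ A := by
  rcases hF.2.2 A hA B hB with h | h | h
  · exact .inl h
  · exact .inr h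
  · exact absurd huB (disjoint_left.mp h huA)

theorem IsCladeFamily.mca_mem (hF : IsCladeFamily F) (u v : Fin n) : mca F u v ∈ F := by
  suffices h : mca F u v ∈ F ∧ u ∈ mca F u v from h.1
  refine inf_induction (p := fun A => A ∈ F ∧ u ∈ A) ⟨hF.1, mem_univ u⟩ ?_
    fun A hA => ⟨(mem_filter.mp hA).1, (mem_filter.mp hA).2.1⟩
  rintro A ⟨hA, huA⟩ B ⟨hB, huB⟩
  rcases hF.subset_or_subset hA hB huA huB with h | h
  · rw [inf_eq_left.mpr h]; exact ⟨hA, huA⟩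
  · rw [inf_eq_right.mpr h]; exact ⟨hB, huB⟩

theorem IsCladeFamily.mca_self (hF : IsCladeFamily F) (u : Fin n) : mca F u u = {u} :=
  Subset.antisymm (mca_subset (hF.2.1 u) (mem_singleton_self u) (mem_singleton_self u))
    (singleton_subset_iff.mpr (left_mem_mca F u u))

theorem IsCladeFamily.mca_ssubset_of_notMem (hF : IsCladeFamily F) {u v k : Fin n}
    (hk : k ∉ mca F u v) : mca F u v ⊂ mca F u k := by
  rcases hF.subset_or_subset (hF.mca_mem u v) (hF.mca_mem u k) (left_mem_mca F u v)
    (left_mem_mca F u k) with h | h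
  · exact ssubset_of_subset_of_ne h fun heq => hk (heq ▸ right_mem_mca F u k)
  · exact absurd (h (right_mem_mca F u k)) hk

theorem IsCladeFamily.mca_subset_or_subset (hF : IsCladeFamily F) (a b k : Fin n) :
    mca F a b ⊆ mca F a k ∨ mca F a b ⊆ mca F b k := by
  rcases hF.subset_or_subset (hF.mca_mem a k) (hF.mca_mem b k) (right_mem_mca F a k)
    (right_mem_mca F b k) with h | h
  · exact .inr (mca_subset (hF.mca_mem b k) (h (left_mem_mca F a k)) (left_mem_mca F b k))
  · exact .inl (mca_subset (hF.mca_mem a k) (left_mem_mca F a k) (h (left_mem_mca F b k)))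

theorem IsCladeFamily.exists_subset_mca (hF : IsCladeFamily F) {S : Finset (Fin n)} {u : Fin n}
    (hu : u ∈ S) : ∃ v ∈ S, S ⊆ mca F u v := by
  obtain ⟨v, hv, hmax⟩ := exists_max_image S (fun k => #(mca F u k)) ⟨u, hu⟩
  refine ⟨v, hv, fun k hk => ?_⟩
  by_contra hk'
  exact (card_lt_card (hF.mca_ssubset_of_notMem hk')).not_ge (hmax k hk)

theorem IsCladeFamily.exists_mca_eq (hF : IsCladeFamily F) {C : Finset (Fin n)} (hC : C ∈ F)
    {u : Fin n} (hu : u ∈ C) : ∃ v ∈ C, mca F u v = C := by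
  obtain ⟨v, hv, hCv⟩ := hF.exists_subset_mca hu
  exact ⟨v, hv, Subset.antisymm (mca_subset hC hu hv) hCv⟩

end Mca

theorem exists_mca_eq_and_subset_mca {n : ℕ} {F₁ F₂ : Finset (Finset (Fin n))}
    (h₁ : IsCladeFamily F₁) (h₂ : IsCladeFamily F₂) {C : Finset (Fin n)} (hC : C ∈ F₁)
    (hCne : C.Nonempty) : ∃ a ∈ C, ∃ b ∈ C, mca F₁ a b = C ∧ C ⊆ mca F₂ a b := by
  classical
  set P := (C ×ˢ C).filter fun p => mca F₁ p.1 p.2 = C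
  have hP : ∀ {a b}, a ∈ C → b ∈ C → mca F₁ a b = C → (a, b) ∈ P := fun ha hb h =>
    mem_filter.mpr ⟨mem_product.mpr ⟨ha, hb⟩, h⟩
  obtain ⟨u, hu⟩ := hCne
  obtain ⟨v, hv, huv⟩ := h₁.exists_mca_eq hC hu
  obtain ⟨⟨a, b⟩, hab, hmax⟩ := exists_max_image P (fun p => #(mca F₂ p.1 p.2)) ⟨_, hP hu hv huv⟩
  obtain ⟨hab, hCab⟩ := mem_filter.mp hab
  obtain ⟨ha, hb⟩ := mem_product.mp hab
  refine ⟨a, ha, b, hb, hCab, fun k hk => ?_⟩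
  by_contra hkab
  have grows : ∀ {x y}, mca F₂ x y = mca F₂ a b → x ∈ C → C ⊆ mca F₁ x k → False :=
    fun hxy hx hCxk => by
      have hlt := card_lt_card (h₂.mca_ssubset_of_notMem (k := k) (hxy ▸ hkab))
      rw [hxy] at hlt
      exact hlt.not_ge (hmax _ (hP hx hk (Subset.antisymm (mca_subset hC hx hk) hCxk)))
  rcases h₁.mca_subset_or_subset a b k with h | h
  · exact grows rfl ha (hCab ▸ h)
  · exact grows (mca_comm F₂ b a) hb (hCab ▸ h)

/-- In the clade graph `G_{T₁,T₂}`, every (non-singleton) clade `C` of `T₁` is adjacent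
to the smallest clade `D` of `T₂` containing `C` (i.e. some edge `e_{ij}` joins them),
and `D` is the unique maximal element of the set of `T₂`-clades adjacent to `C`. -/
theorem cladeGraph_adjacent_to_smallest {n : ℕ} (F₁ F₂ : Finset (Finset (Fin n)))
    (h₁ : IsCladeFamily F₁) (h₂ : IsCladeFamily F₂)
    (C : Finset (Fin n)) (hC : C ∈ F₁) (hC2 : 2 ≤ C.card)
    (D : Finset (Fin n)) (hD : D ∈ F₂) (hCD : C ⊆ D)
    (hDmin : ∀ D' ∈ F₂, C ⊆ D' → D ⊆ D') :
    (∃ i j : Fin n, i ≠ j ∧ C = mca F₁ i j ∧ D = mca F₂ i j) ∧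
    (∀ B ∈ F₂, (∃ i j : Fin n, i ≠ j ∧ C = mca F₁ i j ∧ B = mca F₂ i j) → B ⊆ D) := by
  constructor
  · obtain ⟨a, ha, b, hb, hCab, hCsub⟩ :=
      exists_mca_eq_and_subset_mca h₁ h₂ hC (card_pos.mp (by omega))
    have hab : a ≠ b := by
      rintro rfl
      rw [h₁.mca_self] at hCab
      simp [← hCab] at hC2
    exact ⟨a, b, hab, hCab.symm,
      Subset.antisymm (hDmin _ (h₂.mca_mem a b) hCsub) (mca_subset hD (hCD ha) (hCD hb))⟩
  · rintro B - ⟨i, j, -, hCij, rfl⟩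
    exact mca_subset hD (hCD (hCij ▸ left_mem_mca F₁ i j)) (hCD (hCij ▸ right_mem_mca F₁ i j))
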